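/- arXiv:2112.11769 — 8 statements merged into one kernel-verified Lean document; each statement's English description precedes it below -/
import Mathlib

section
/- A 2-CNF formula φ is satisfiable if and only if there is no variable v such that the literal (v, true) is reachable from (v, false) and (v, false) is reachable from (v, true) in the implication relation of φ (i.e., no variable lies in the same strongly connected component of the implication graph as its negation). -/
/-- The negation of a literal. -/
def Literal.neg {V : Type*} (l : V × Bool) : V × Bool := (l.1, !l.2)

/-- The implication relation of a 2-CNF formula `φ`: for every clause `(l₁, l₂) ∈ φ` we have
the implications `¬l₁ ⟹ l₂` and `¬l₂ ⟹ l₁`. -/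
def impRel {V : Type*} (φ : Finset ((V × Bool) × (V × Bool))) :
    (V × Bool) → (V × Bool) → Prop :=
  fun l l' => ∃ p ∈ φ, (l = Literal.neg p.1 ∧ l' = p.2) ∨ (l = Literal.neg p.2 ∧ l' = p.1)

/-- A 2-CNF formula is satisfiable iff no variable lies in the same strongly connected
component of the implication graph as its negation. -/
theorem twoSat_satisfiable_iff {V : Type*} [DecidableEq V]
    (φ : Finset ((V × Bool) × (V × Bool))) :
    (∃ σ : V → Bool, ∀ p ∈ φ, σ p.1.1 = p.1.2 ∨ σ p.2.1 = p.2.2) ↔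
      ¬∃ v : V, Relation.ReflTransGen (impRel φ) (v, false) (v, true) ∧
        Relation.ReflTransGen (impRel φ) (v, true) (v, false) := by
  classical
  constructor
  · rintro ⟨σ, hσ⟩ ⟨v, h1, h2⟩
    have key : ∀ l l' : V × Bool, Relation.ReflTransGen (impRel φ) l l' →
        σ l.1 = l.2 → σ l'.1 = l'.2 := by
      intro l l' h
      induction h with
      | refl => exact id
      | tail _ hstep ih =>
        intro hl
        have hmid := ih hl
        obtain ⟨p, hp, hcase⟩ := hstep
        rcases hcase with ⟨he1, he2⟩ | ⟨he1, he2⟩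
        · rcases hσ p hp with h | h
          · exfalso
            rw [he1] at hmid
            simp [Literal.neg] at hmid
            rw [h] at hmid
            simp at hmid
          · rw [he2]; exact h
        · rcases hσ p hp with h | h
          · rw [he2]; exact h
          · exfalso
            rw [he1] at hmid
            simp [Literal.neg] at hmid
            rw [h] at hmid
            simp at hmid
    cases hv : σ v with
    | true =>
      have := key (v, true) (v, false) h2 (by simpa using hv)
      simp [hv] at this
    | false =>
      have := key (v, false) (v, true) h1 (by simpa using hv)
      simp [hv] at this
  · intro hno
    letI P : Preorder (V × Bool) :=
      { le := Relation.ReflTransGen (impRel φ)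
        le_refl := fun _ => Relation.ReflTransGen.refl
        le_trans := fun _ _ _ => Relation.ReflTransGen.trans }
    obtain ⟨s, hs, hrs⟩ := extend_partialOrder
      ((· ≤ ·) : Antisymmetrization (V × Bool) (· ≤ ·) →
        Antisymmetrization (V × Bool) (· ≤ ·) → Prop)
    haveI := hs
    set q : V × Bool → Antisymmetrization (V × Bool) (· ≤ ·) :=
      toAntisymmetrization (· ≤ ·) with hq
    -- reachability gives s
    have mono : ∀ l l' : V × Bool, Relation.ReflTransGen (impRel φ) l l' → s (q l) (q l') := by
      intro l l' h
      exact hrs _ _ (toAntisymmetrization_le_toAntisymmetrization_iff.mpr h)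
    -- distinct classes for a variable and its negation
    have hne : ∀ v : V, q (v, false) ≠ q (v, true) := by
      intro v h
      have : AntisymmRel (· ≤ ·) ((v, false) : V × Bool) (v, true) := Quotient.exact' h
      exact hno ⟨v, this.1, this.2⟩
    have total := hs.toTotal.total
    have antisymm := hs.toIsPartialOrder.toAntisymm.antisymm
    refine ⟨fun v => if s (q (v, false)) (q (v, true)) then true else false, ?_⟩
    -- truth characterization
    have hchar : ∀ l : V × Bool,
        (if s (q (l.1, false)) (q (l.1, true)) then true else false) = l.2 ↔
          s (q (Literal.neg l)) (q l) := by
      rintro ⟨v, b⟩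
      cases b with
      | true => simp [Literal.neg]
      | false =>
        simp only [Literal.neg, Bool.not_false]
        constructor
        · intro h
          have hft : ¬ s (q (v, false)) (q (v, true)) := by
            intro h2; simp [h2] at h
          exact (total _ _).resolve_left hft
        · intro h
          have : ¬ s (q (v, false)) (q (v, true)) := fun h2 => hne v (antisymm _ _ h2 h)
          simp [this]
    intro p hp
    by_contra hcon
    push_neg at hcon
    obtain ⟨hc1, hc2⟩ := hcon
    -- falsity gives the reversed strict inequalities
    have hf1 : ¬ s (q (Literal.neg p.1)) (q p.1) := fun h => hc1 ((hchar p.1).mpr h)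
    have hf2 : ¬ s (q (Literal.neg p.2)) (q p.2) := fun h => hc2 ((hchar p.2).mpr h)
    have hs1 : s (q p.1) (q (Literal.neg p.1)) := (total _ _).resolve_left hf1
    have hs2 : s (q p.2) (q (Literal.neg p.2)) := (total _ _).resolve_left hf2
    have himp1 : s (q (Literal.neg p.1)) (q p.2) :=
      mono _ _ (Relation.ReflTransGen.single ⟨p, hp, Or.inl ⟨rfl, rfl⟩⟩)
    have himp2 : s (q (Literal.neg p.2)) (q p.1) :=
      mono _ _ (Relation.ReflTransGen.single ⟨p, hp, Or.inr ⟨rfl, rfl⟩⟩)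
    have htrans := hs.toIsPartialOrder.toIsPreorder.toIsTrans.trans
    exact hf1 (htrans _ _ _ (htrans _ _ _ himp1 hs2) himp2)
end

section
/- If an assignment σ satisfies the 2-CNF formula φ, the literal l is true under σ, and the literal l' is reachable from l in the implication relation of φ, then l' is true under σ. -/
/-- If `σ` satisfies the 2-CNF formula `φ`, the literal `l` is true under `σ`, and `l'` is
reachable from `l` in the implication relation of `φ`, then `l'` is true under `σ`. -/
theorem twoSat_reachable_true {V : Type*} [DecidableEq V]
    (φ : Finset ((V × Bool) × (V × Bool))) (σ : V → Bool)
    (hσ : ∀ p ∈ φ, σ p.1.1 = p.1.2 ∨ σ p.2.1 = p.2.2)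
    (l l' : V × Bool) (hl : σ l.1 = l.2)
    (hreach : Relation.ReflTransGen (impRel φ) l l') :
    σ l'.1 = l'.2 := by
  induction hreach with
  | refl => exact hl
  | tail _ hstep ih =>
    obtain ⟨p, hp, h | h⟩ := hstep <;>
    · obtain ⟨h1, h2⟩ := h
      subst h1 h2
      rcases hσ p hp with h' | h'
      · simp_all [Literal.neg]
      · simp_all [Literal.neg]
end

section
/- A Horn CNF formula Γ is satisfiable if and only if the assignment σ_F, defined by σ_F v = true iff v ∈ F(Γ), satisfies Γ. -/
open Classical in
/-- The set of forced atoms of a CNF formula `Γ`: the least set of variables closed under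
the rule that if a clause `C ∈ Γ` contains a positive literal `(p, true)` and every variable
occurring negatively in `C` is forced, then `p` is forced. -/
inductive Forced {V : Type*} (Γ : Finset (Finset (V × Bool))) : V → Prop
  | step (C : Finset (V × Bool)) (p : V) (hC : C ∈ Γ) (hp : (p, true) ∈ C)
      (h : ∀ q : V, (q, false) ∈ C → Forced Γ q) : Forced Γ p

open Classical in
/-- A Horn CNF formula `Γ` is satisfiable iff the assignment `σ_F`, which sets exactly the
forced atoms to `true`, satisfies `Γ`. -/
theorem horn_satisfiable_iff_forced_assignment_satisfies {V : Type*} [DecidableEq V]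
    (Γ : Finset (Finset (V × Bool)))
    (hHorn : ∀ C ∈ Γ, (C.filter fun l => l.2 = true).card ≤ 1) :
    (∃ σ : V → Bool, ∀ C ∈ Γ, ∃ l ∈ C, σ l.1 = l.2) ↔
      (∀ C ∈ Γ, ∃ l ∈ C, (fun v : V => decide (Forced Γ v)) l.1 = l.2) := by
  constructor
  · rintro ⟨σ, hσ⟩
    -- Any satisfying assignment makes all forced atoms true.
    have key : ∀ v : V, Forced Γ v → σ v = true := by
      intro v hv
      induction hv with
      | step C p hC hp h ih =>
        obtain ⟨l, hl, hsl⟩ := hσ C hC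
        rcases Bool.eq_false_or_eq_true l.2 with hb | hb
        swap
        · exact absurd hsl (by
            have := ih l.1 (by rw [← hb]; rwa [Prod.mk.eta])
            simp [this, hb])
        · have hmem1 : l ∈ C.filter fun l => l.2 = true := by
            simp [Finset.mem_filter, hl, hb]
          have hmem2 : (p, true) ∈ C.filter fun l => l.2 = true := by
            simp [Finset.mem_filter, hp]
          have : l = (p, true) :=
            Finset.card_le_one.mp (hHorn C hC) l hmem1 (p, true) hmem2
          rw [this] at hsl
          exact hsl
    intro C hC
    by_cases hneg : ∃ q : V, (q, false) ∈ C ∧ ¬ Forced Γ q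
    · obtain ⟨q, hq, hnq⟩ := hneg
      exact ⟨(q, false), hq, by simp [hnq]⟩
    · push_neg at hneg
      by_cases hpos : ∃ p : V, (p, true) ∈ C
      · obtain ⟨p, hp⟩ := hpos
        have : Forced Γ p := Forced.step C p hC hp hneg
        exact ⟨(p, true), hp, by simp [this]⟩
      · push_neg at hpos
        exfalso
        obtain ⟨l, hl, hsl⟩ := hσ C hC
        rcases Bool.eq_false_or_eq_true l.2 with hb | hb
        swap
        · have hf : Forced Γ l.1 := hneg l.1 (by rw [← hb]; rwa [Prod.mk.eta])
          have : σ l.1 = true := key l.1 hf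
          rw [this, hb] at hsl
          exact Bool.true_eq_false.mp hsl
        · exact hpos l.1 (by rw [← hb]; rwa [Prod.mk.eta])
  · intro h
    exact ⟨fun v => decide (Forced Γ v), h⟩
end

section
/- If Γ is a CNF formula and {l} ∈ Γ is a unit clause, then Γ is satisfiable if and only if the formula Γ' obtained from Γ by the unit-propagation step on l is satisfiable. -/
/-- Unit propagation on a literal `l`: delete every clause containing `l` and remove the
literal `neg l` from all remaining clauses. -/
def unitProp {V : Type*} [DecidableEq V] (Γ : Finset (Finset (V × Bool))) (l : V × Bool) :
    Finset (Finset (V × Bool)) :=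
  (Γ.filter fun C => l ∉ C).image fun C => C.erase (Literal.neg l)

/-- If `{l} ∈ Γ` is a unit clause, then `Γ` is satisfiable iff the formula obtained from `Γ`
by the unit-propagation step on `l` is satisfiable. -/
theorem unitProp_satisfiable_iff {V : Type*} [DecidableEq V]
    (Γ : Finset (Finset (V × Bool))) (l : V × Bool)
    (hl : ({l} : Finset (V × Bool)) ∈ Γ) :
    (∃ σ : V → Bool, ∀ C ∈ Γ, ∃ m ∈ C, σ m.1 = m.2) ↔
      (∃ σ : V → Bool, ∀ C ∈ unitProp Γ l, ∃ m ∈ C, σ m.1 = m.2) := by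
  constructor
  · rintro ⟨σ, hσ⟩
    refine ⟨σ, fun C hC => ?_⟩
    simp only [unitProp, Finset.mem_image, Finset.mem_filter] at hC
    obtain ⟨C', ⟨hC'Γ, hlC'⟩, rfl⟩ := hC
    obtain ⟨m, hmC', hm⟩ := hσ C' hC'Γ
    have hσl : σ l.1 = l.2 := by
      obtain ⟨m, hm1, hm2⟩ := hσ {l} hl
      simp only [Finset.mem_singleton] at hm1; subst hm1; exact hm2
    have hmne : m ≠ Literal.neg l := by
      intro h; subst h
      simp only [Literal.neg] at hm
      rw [hσl] at hm
      exact Bool.not_ne_self l.2 hm.symm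
    exact ⟨m, Finset.mem_erase.2 ⟨hmne, hmC'⟩, hm⟩
  · rintro ⟨σ, hσ⟩
    refine ⟨Function.update σ l.1 l.2, fun C hC => ?_⟩
    by_cases hlC : l ∈ C
    · exact ⟨l, hlC, by simp⟩
    · have : C.erase (Literal.neg l) ∈ unitProp Γ l := by
        simp only [unitProp, Finset.mem_image, Finset.mem_filter]
        exact ⟨C, ⟨hC, hlC⟩, rfl⟩
      obtain ⟨m, hm1, hm2⟩ := hσ _ this
      obtain ⟨hmne, hmC⟩ := Finset.mem_erase.1 hm1
      refine ⟨m, hmC, ?_⟩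
      by_cases h1 : m.1 = l.1
      · have h2 : m.2 = l.2 := by
          by_contra h2
          apply hmne
          simp only [Literal.neg]
          exact Prod.ext h1 (by revert h2; cases l.2 <;> cases m.2 <;> simp)
        rw [h1, h2, Function.update_self]
      · rw [Function.update_of_ne h1]; exact hm2
end

section
/- For every CNF formula φ over variable type V, there exists a CNF formula ψ over the extended variable type V ⊕ ℕ such that: every clause of ψ contains at most 3 literals; ψ is satisfiable if and only if φ is satisfiable; and the number of clauses of ψ is at most (Σ_{C ∈ φ} C.card) + 4 · φ.card. -/
namespace SatToThreeAux

variable {V : Type} [DecidableEq V]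

def emb (l : V × Bool) : (V ⊕ ℕ) × Bool := (Sum.inl l.1, l.2)

def zv (t i : ℕ) (b : Bool) : (V ⊕ ℕ) × Bool := (Sum.inr (Nat.pair t i), b)

def gad (t : ℕ) : ℕ → List (V × Bool) → List (Finset ((V ⊕ ℕ) × Bool))
  | i, [] => [{zv t i false}]
  | i, l :: ls => insert (zv t i false) (insert (emb l) {zv t (i+1) true}) :: gad t (i+1) ls

lemma gad_nil (t i : ℕ) : gad (V := V) t i [] = [{zv t i false}] := rfl

lemma gad_cons (t i : ℕ) (l : V × Bool) (ls : List (V × Bool)) :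
    gad t i (l :: ls) =
      insert (zv t i false) (insert (emb l) {zv t (i+1) true}) :: gad t (i+1) ls := rfl

noncomputable def gadList (t : ℕ) (C : Finset (V × Bool)) :
    List (Finset ((V ⊕ ℕ) × Bool)) :=
  ({zv t 0 true} : Finset _) :: gad t 0 C.toList

noncomputable def build : ℕ → List (Finset (V × Bool)) → List (Finset ((V ⊕ ℕ) × Bool))
  | _, [] => []
  | t, C :: Cs => gadList t C ++ build (t+1) Cs

lemma build_nil (t : ℕ) : build (V := V) t [] = [] := rfl

lemma build_cons (t : ℕ) (C : Finset (V × Bool)) (Cs : List (Finset (V × Bool))) :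
    build t (C :: Cs) = gadList t C ++ build (t+1) Cs := rfl

lemma gad_length (t : ℕ) (ls : List (V × Bool)) : ∀ i, (gad t i ls).length = ls.length + 1 := by
  induction ls with
  | nil => intro i; rfl
  | cons l ls ih => intro i; simp [gad_cons, ih (i+1)]

lemma build_length (Cs : List (Finset (V × Bool))) :
    ∀ t, (build t Cs).length = (Cs.map Finset.card).sum + 2 * Cs.length := by
  induction Cs with
  | nil => intro t; rfl
  | cons C Cs ih =>
      intro t
      simp [build_cons, gadList, gad_length, ih (t+1)]
      ring

lemma card_gad (t : ℕ) (ls : List (V × Bool)) :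
    ∀ i, ∀ D ∈ gad t i ls, D.card ≤ 3 := by
  induction ls with
  | nil =>
      intro i D hD
      rw [gad_nil, List.mem_singleton] at hD
      subst hD; simp
  | cons l ls ih =>
      intro i D hD
      rw [gad_cons] at hD
      rcases (List.mem_cons).1 hD with h | h
      · subst h
        have h1 := Finset.card_insert_le (zv (V := V) t i false)
          (insert (emb l) {zv t (i+1) true})
        have h2 := Finset.card_insert_le (emb l) ({zv t (i+1) true} : Finset ((V ⊕ ℕ) × Bool))
        have h3 : ({zv (V := V) t (i+1) true} : Finset ((V ⊕ ℕ) × Bool)).card = 1 :=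
          Finset.card_singleton _
        omega
      · exact ih (i+1) D h

lemma card_build (Cs : List (Finset (V × Bool))) :
    ∀ t, ∀ D ∈ build t Cs, D.card ≤ 3 := by
  induction Cs with
  | nil => intro t D hD; rw [build_nil] at hD; cases hD
  | cons C Cs ih =>
      intro t D hD
      rw [build_cons] at hD
      rcases List.mem_append.1 hD with h | h
      · rcases (List.mem_cons).1 h with h | h
        · subst h; simp
        · exact card_gad t _ _ D h
      · exact ih (t+1) D h

/-- Soundness of one gadget: if all gadget clauses are satisfied and the entry chain variable
is true, some original literal of the clause is true. -/
lemma gad_sound (σ : (V ⊕ ℕ) → Bool) (t : ℕ) (ls : List (V × Bool)) :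
    ∀ i, (∀ D ∈ gad t i ls, ∃ l ∈ D, σ l.1 = l.2) →
      σ (Sum.inr (Nat.pair t i)) = true →
      ∃ l ∈ ls, σ (Sum.inl l.1) = l.2 := by
  induction ls with
  | nil =>
      intro i h htrue
      obtain ⟨l, hl, hval⟩ := h _ (by rw [gad_nil]; exact List.mem_singleton_self _)
      rw [Finset.mem_singleton] at hl; subst hl
      simp only [zv] at hval
      rw [htrue] at hval; cases hval
  | cons l ls ih =>
      intro i h htrue
      rw [gad_cons] at h
      obtain ⟨l', hl', hval⟩ := h _ (List.mem_cons_self)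
      rcases Finset.mem_insert.1 hl' with rfl | hl'
      · simp only [zv] at hval; rw [htrue] at hval; cases hval
      · rcases Finset.mem_insert.1 hl' with rfl | hl'
        · exact ⟨l, List.mem_cons_self, hval⟩
        · rw [Finset.mem_singleton] at hl'; subst hl'
          simp only [zv] at hval
          obtain ⟨l'', hl'', hv⟩ :=
            ih (i+1) (fun D hD => h D (List.mem_cons_of_mem _ hD)) hval
          exact ⟨l'', List.mem_cons_of_mem _ hl'', hv⟩

/-- Completeness of one gadget: if the chain variables are set according to
"some literal at position ≥ j is true", all gadget clauses are satisfied. -/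
lemma gad_complete (σ : (V ⊕ ℕ) → Bool) (τ : V → Bool) (hσ : ∀ v, σ (Sum.inl v) = τ v)
    (t : ℕ) (ls : List (V × Bool)) :
    ∀ i, (∀ j, σ (Sum.inr (Nat.pair t (i + j))) = decide (∃ l ∈ ls.drop j, τ l.1 = l.2)) →
      ∀ D ∈ gad t i ls, ∃ l ∈ D, σ l.1 = l.2 := by
  induction ls with
  | nil =>
      intro i h D hD
      rw [gad_nil, List.mem_singleton] at hD; subst hD
      refine ⟨zv t i false, Finset.mem_singleton_self _, ?_⟩
      have h0 := h 0
      simpa [zv] using h0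
  | cons l ls ih =>
      intro i h D hD
      rw [gad_cons] at hD
      rcases (List.mem_cons).1 hD with rfl | hD
      · by_cases hz : σ (Sum.inr (Nat.pair t i)) = true
        · have h0 := h 0
          rw [Nat.add_zero, hz] at h0
          rw [List.drop_zero] at h0
          have hex : ∃ l' ∈ l :: ls, τ l'.1 = l'.2 := of_decide_eq_true h0.symm
          obtain ⟨l', hl', hv⟩ := hex
          rcases (List.mem_cons).1 hl' with rfl | hl'
          · exact ⟨emb l', Finset.mem_insert_of_mem (Finset.mem_insert_self _ _),
              by simpa [emb, hσ] using hv⟩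
          · refine ⟨zv t (i+1) true,
              Finset.mem_insert_of_mem (Finset.mem_insert_of_mem (Finset.mem_singleton_self _)),
              ?_⟩
            have h1 := h 1
            simp only [List.drop_succ_cons, List.drop_zero] at h1
            simp only [zv]
            rw [h1]
            simp only [decide_eq_true_eq]
            exact ⟨l', hl', hv⟩
        · refine ⟨zv t i false, Finset.mem_insert_self _ _, ?_⟩
          simp only [zv]
          simp only [Bool.not_eq_true] at hz
          exact hz
      · refine ih (i+1) (fun j => ?_) D hD
        have := h (j+1)
        rw [List.drop_succ_cons] at this
        simpa [Nat.add_assoc, Nat.add_comm 1 j] using this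

noncomputable def extend (τ : V → Bool) (L : List (Finset (V × Bool))) : (V ⊕ ℕ) → Bool
  | Sum.inl v => τ v
  | Sum.inr n =>
      decide (∃ l ∈ ((L.getD (Nat.unpair n).1 ∅).toList).drop (Nat.unpair n).2, τ l.1 = l.2)

omit [DecidableEq V] in
lemma getD_drop (L : List (Finset (V × Bool))) (t : ℕ) :
    L.getD t ∅ = (L.drop t).getD 0 ∅ := by
  induction t generalizing L with
  | zero => rfl
  | succ n ih =>
      cases L with
      | nil => simp
      | cons a L => exact ih L

omit [DecidableEq V] in
lemma drop_getD {L : List (Finset (V × Bool))} {t : ℕ} {C : Finset (V × Bool)}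
    {Cs : List (Finset (V × Bool))} (h : L.drop t = C :: Cs) : L.getD t ∅ = C := by
  rw [getD_drop, h]; rfl

omit [DecidableEq V] in
lemma drop_succ_of_drop {L : List (Finset (V × Bool))} {t : ℕ} {C : Finset (V × Bool)}
    {Cs : List (Finset (V × Bool))} (h : L.drop t = C :: Cs) : L.drop (t+1) = Cs := by
  have : L.drop (t+1) = (L.drop t).drop 1 := by rw [List.drop_drop]
  rw [this, h]; rfl

lemma build_sound (σ : (V ⊕ ℕ) → Bool) (Cs : List (Finset (V × Bool))) :
    ∀ t, (∀ D ∈ build t Cs, ∃ l ∈ D, σ l.1 = l.2) →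
      ∀ C ∈ Cs, ∃ l ∈ C, σ (Sum.inl l.1) = l.2 := by
  induction Cs with
  | nil => intro t _ C hC; cases hC
  | cons C Cs ih =>
      intro t h C' hC'
      rw [build_cons] at h
      rcases (List.mem_cons).1 hC' with rfl | hC'
      · have hgadall : ∀ D ∈ gadList t C', ∃ l ∈ D, σ l.1 = l.2 := fun D hD =>
          h D (List.mem_append_left _ hD)
        have hunit : σ (Sum.inr (Nat.pair t 0)) = true := by
          obtain ⟨l, hl, hv⟩ := hgadall _ (List.mem_cons_self)
          rw [Finset.mem_singleton] at hl; subst hl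
          simpa [zv] using hv
        obtain ⟨l, hl, hv⟩ := gad_sound σ t C'.toList 0
          (fun D hD => hgadall D (List.mem_cons_of_mem _ hD)) hunit
        exact ⟨l, Finset.mem_toList.1 hl, hv⟩
      · exact ih (t+1) (fun D hD => h D (List.mem_append_right _ hD)) C' hC'

lemma build_complete (τ : V → Bool) (L : List (Finset (V × Bool)))
    (Cs : List (Finset (V × Bool))) :
    ∀ t, L.drop t = Cs →
      (∀ C ∈ Cs, ∃ l ∈ C, τ l.1 = l.2) →
      ∀ D ∈ build t Cs, ∃ l ∈ D, extend τ L l.1 = l.2 := by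
  induction Cs with
  | nil => intro t _ _ D hD; rw [build_nil] at hD; cases hD
  | cons C Cs ih =>
      intro t hdrop hsat D hD
      rw [build_cons] at hD
      have hC : L.getD t ∅ = C := drop_getD hdrop
      have hchain : ∀ j, extend τ L (Sum.inr (Nat.pair t (0 + j))) =
          decide (∃ l ∈ C.toList.drop j, τ l.1 = l.2) := by
        intro j
        simp only [Nat.zero_add, extend, Nat.unpair_pair, hC]
      rcases List.mem_append.1 hD with h | h
      · rcases (List.mem_cons).1 h with rfl | h
        · refine ⟨zv t 0 true, Finset.mem_singleton_self _, ?_⟩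
          have hc := hchain 0
          rw [Nat.zero_add, List.drop_zero] at hc
          simp only [zv]
          rw [hc]
          simp only [decide_eq_true_eq]
          obtain ⟨l, hl, hv⟩ := hsat C (List.mem_cons_self)
          exact ⟨l, Finset.mem_toList.2 hl, hv⟩
        · exact gad_complete (extend τ L) τ (fun v => rfl) t C.toList 0 hchain D h
      · exact ih (t+1) (drop_succ_of_drop hdrop)
          (fun C' hC' => hsat C' (List.mem_cons_of_mem _ hC')) D h

lemma sum_toList' {α : Type} [DecidableEq α] (s : Finset α) (f : α → ℕ) :
    (s.toList.map f).sum = ∑ x ∈ s, f x := by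
  calc (s.toList.map f).sum = ((↑(s.toList.map f) : Multiset ℕ)).sum := (Multiset.sum_coe _).symm
    _ = (Multiset.map f ↑(s.toList)).sum := by rw [Multiset.map_coe]
    _ = ∑ x ∈ s, f x := by
        simp only [Finset.toList, Multiset.coe_toList]
        rfl

end SatToThreeAux

open SatToThreeAux in
/-- SAT reduces to 3-SAT: for every CNF formula `φ` over `V` there is an equisatisfiable CNF
formula `ψ` over `V ⊕ ℕ` whose clauses have at most 3 literals, with at most
`(Σ_{C ∈ φ} |C|) + 4·|φ|` clauses. -/
theorem sat_to_threeSat {V : Type} [DecidableEq V] (φ : Finset (Finset (V × Bool))) :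
    ∃ ψ : Finset (Finset ((V ⊕ ℕ) × Bool)),
      (∀ C ∈ ψ, C.card ≤ 3) ∧
      ((∃ σ : (V ⊕ ℕ) → Bool, ∀ C ∈ ψ, ∃ l ∈ C, σ l.1 = l.2) ↔
        (∃ σ : V → Bool, ∀ C ∈ φ, ∃ l ∈ C, σ l.1 = l.2)) ∧
      ψ.card ≤ (∑ C ∈ φ, C.card) + 4 * φ.card := by
  refine ⟨(build 0 φ.toList).toFinset, ?_, ?_, ?_⟩
  · intro C hC
    exact card_build φ.toList 0 C (List.mem_toFinset.1 hC)
  · constructor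
    · rintro ⟨σ, hσ⟩
      refine ⟨fun v => σ (Sum.inl v), fun C hC => ?_⟩
      exact build_sound σ φ.toList 0 (fun D hD => hσ D (List.mem_toFinset.2 hD)) C
        (Finset.mem_toList.2 hC)
    · rintro ⟨τ, hτ⟩
      refine ⟨extend τ φ.toList, fun D hD => ?_⟩
      exact build_complete τ φ.toList φ.toList 0 rfl
        (fun C hC => hτ C (Finset.mem_toList.1 hC)) D (List.mem_toFinset.1 hD)
  · calc (build 0 φ.toList).toFinset.card ≤ (build 0 φ.toList).length :=
        List.toFinset_card_le _
      _ = (φ.toList.map Finset.card).sum + 2 * φ.toList.length := build_length _ _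
      _ = (∑ C ∈ φ, C.card) + 2 * φ.card := by
          rw [sum_toList', Finset.length_toList]
      _ ≤ (∑ C ∈ φ, C.card) + 4 * φ.card := by omega
end

section
/- The 3-CNF formula c is satisfiable if and only if the graph G contains a clique of size k, i.e., (∃ σ : V → Bool, ∀ j : Fin k, ∃ p : Fin 3, σ (c j p).1 = (c j p).2) ↔ (∃ S : Finset (Fin k × Fin 3), G.IsNClique k S). -/
/-- The clique-reduction graph of a 3-CNF formula `c` with `k` clauses: vertices are the
literal occurrences `(j, p) : Fin k × Fin 3`, and two vertices are adjacent iff they come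
from different clauses and their literals are not complementary. -/
def cliqueGraph {V : Type*} [DecidableEq V] {k : ℕ} (c : Fin k → Fin 3 → V × Bool) :
    SimpleGraph (Fin k × Fin 3) where
  Adj u w := u.1 ≠ w.1 ∧
    ¬((c u.1 u.2).1 = (c w.1 w.2).1 ∧ (c u.1 u.2).2 ≠ (c w.1 w.2).2)
  symm := by
    constructor
    intro u w h
    exact ⟨h.1.symm, fun hc => h.2 ⟨hc.1.symm, fun he => hc.2 he.symm⟩⟩
  loopless := by
    constructor
    intro u h
    exact h.1 rfl

/-- A 3-CNF formula is satisfiable iff its clique-reduction graph contains a clique of size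
`k` (the number of clauses). -/
theorem threeSat_iff_clique {V : Type*} [DecidableEq V] {k : ℕ}
    (c : Fin k → Fin 3 → V × Bool) :
    (∃ σ : V → Bool, ∀ j : Fin k, ∃ p : Fin 3, σ (c j p).1 = (c j p).2) ↔
      (∃ S : Finset (Fin k × Fin 3), (cliqueGraph c).IsNClique k S) := by
  constructor
  · rintro ⟨σ, hσ⟩
    choose p hp using hσ
    refine ⟨Finset.image (fun j => (j, p j)) Finset.univ, ?_, ?_⟩
    · intro u hu w hw huw
      simp only [Finset.coe_image, Set.mem_image] at hu hw
      obtain ⟨j, -, rfl⟩ := hu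
      obtain ⟨i, -, rfl⟩ := hw
      refine ⟨fun h => huw (by obtain rfl : j = i := h; rfl), fun hc => ?_⟩
      exact hc.2 ((hp j).symm.trans (hc.1 ▸ hp i))
    · rw [Finset.card_image_of_injective _ (fun a b h => (Prod.mk.injEq ..).mp h |>.1),
        Finset.card_univ, Fintype.card_fin]
  · rintro ⟨S, hclique, hcard⟩
    classical
    set σ : V → Bool := fun v =>
      decide (∃ u ∈ S, (c u.1 u.2).1 = v ∧ (c u.1 u.2).2 = true) with hσdef
    refine ⟨σ, fun j => ?_⟩
    -- the first projection is injective on S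
    have hinj : Set.InjOn Prod.fst (S : Set (Fin k × Fin 3)) := by
      intro u hu w hw h
      by_contra hne
      exact (hclique hu hw hne).1 h
    have himg : Finset.image Prod.fst S = Finset.univ := by
      apply Finset.eq_univ_of_card
      rw [Finset.card_image_of_injOn hinj, hcard, Fintype.card_fin]
    have hj : j ∈ Finset.image Prod.fst S := himg ▸ Finset.mem_univ j
    obtain ⟨u, huS, hu1⟩ := Finset.mem_image.mp hj
    subst hu1
    refine ⟨u.2, ?_⟩
    cases hb : (c u.1 u.2).2 with
    | true =>
      simp only [hσdef, decide_eq_true_eq]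
      exact ⟨u, huS, rfl, hb⟩
    | false =>
      simp only [hσdef, decide_eq_false_iff_not]
      rintro ⟨w, hwS, hvar, htrue⟩
      rcases eq_or_ne u w with rfl | hne
      · rw [hb] at htrue; exact Bool.false_ne_true htrue
      · exact (hclique huS hwS hne).2 ⟨hvar.symm, by rw [hb, htrue]; simp⟩
end

section
/- Let cT, cF, cB : Fin 3 be pairwise distinct colors, let t₀, t₁, t₂ : Bool, and set col i = cT if tᵢ = true and col i = cF otherwise. Then there exist colors g₀, g₁, g₂, g₃, g₄, g₅ : Fin 3 such that the two members of each of the following pairs are different — (g₀, g₅), (g₀, cT), (g₀, col 2), (cT, g₃), (cT, g₄), (cT, g₂), (g₃, g₁), (g₃, col 1), (cF, g₁), (col 0, g₄), (g₂, g₅), (g₂, g₄), (g₁, g₅) — if and only if (t₀ || t₁ || t₂) = true. -/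
set_option maxHeartbeats 4000000 in
set_option synthInstance.maxHeartbeats 2000000 in
set_option synthInstance.maxSize 2048 in
/-- The clause gadget of the 3-SAT-to-3-coloring reduction: with palette colors
`cT, cF, cB` pairwise distinct and literal vertices colored `cT`/`cF` according to the truth
values `t₀, t₁, t₂`, the six internal gadget vertices can be properly 3-colored iff the
clause `t₀ ∨ t₁ ∨ t₂` is true. -/
theorem clause_gadget_colorable_iff (cT cF cB : Fin 3)
    (hTF : cT ≠ cF) (hTB : cT ≠ cB) (hFB : cF ≠ cB)
    (t0 t1 t2 : Bool) :
    (∃ g0 g1 g2 g3 g4 g5 : Fin 3,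
      g0 ≠ g5 ∧ g0 ≠ cT ∧ g0 ≠ (if t2 then cT else cF) ∧
      cT ≠ g3 ∧ cT ≠ g4 ∧ cT ≠ g2 ∧
      g3 ≠ g1 ∧ g3 ≠ (if t1 then cT else cF) ∧ cF ≠ g1 ∧
      (if t0 then cT else cF) ≠ g4 ∧
      g2 ≠ g5 ∧ g2 ≠ g4 ∧ g1 ≠ g5) ↔ (t0 || t1 || t2) = true := by
  revert hTF hTB hFB
  revert cT cF cB t0 t1 t2
  decide
end

section
/- The 3-CNF formula c is satisfiable if and only if the graph G(c) is 3-colorable (G(c).Colorable 3). -/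
/-- Vertex type of the 3-SAT-to-3-coloring reduction graph: the palette triangle `T, F, B`,
the literal vertices `(v, b)`, and six internal gadget vertices per clause. -/
abbrev ColVtx (V : Type) (k : ℕ) : Type := (Fin 3) ⊕ (V × Bool) ⊕ (Fin k × Fin 6)

/-- The palette vertex `T`. -/
def vT {V : Type} {k : ℕ} : ColVtx V k := Sum.inl 0

/-- The palette vertex `F`. -/
def vF {V : Type} {k : ℕ} : ColVtx V k := Sum.inl 1

/-- The palette vertex `B`. -/
def vB {V : Type} {k : ℕ} : ColVtx V k := Sum.inl 2

/-- The literal vertex of literal `l`. -/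
def litV {V : Type} {k : ℕ} (l : V × Bool) : ColVtx V k := Sum.inr (Sum.inl l)

/-- The internal gadget vertex `g j r` of clause `j`. -/
def gadV {V : Type} {k : ℕ} (j : Fin k) (r : Fin 6) : ColVtx V k := Sum.inr (Sum.inr (j, r))

/-- The edges (before symmetrization) of the 3-SAT-to-3-coloring reduction graph of the
3-CNF formula `c`. -/
def colRel {V : Type} {k : ℕ} (c : Fin k → Fin 3 → V × Bool) :
    ColVtx V k → ColVtx V k → Prop := fun u w =>
  (u = vT ∧ w = vF) ∨ (u = vF ∧ w = vB) ∨ (u = vB ∧ w = vT) ∨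
  (∃ v : V,
    (u = litV (v, true) ∧ w = litV (v, false)) ∨
    (u = litV (v, true) ∧ w = vB) ∨
    (u = litV (v, false) ∧ w = vB)) ∨
  (∃ j : Fin k,
    (u = gadV j 0 ∧ w = gadV j 5) ∨ (u = gadV j 0 ∧ w = vT) ∨
    (u = gadV j 0 ∧ w = litV (c j 2)) ∨
    (u = vT ∧ w = gadV j 3) ∨ (u = vT ∧ w = gadV j 4) ∨ (u = vT ∧ w = gadV j 2) ∨
    (u = gadV j 3 ∧ w = gadV j 1) ∨ (u = gadV j 3 ∧ w = litV (c j 1)) ∨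
    (u = vF ∧ w = gadV j 1) ∨ (u = litV (c j 0) ∧ w = gadV j 4) ∨
    (u = gadV j 2 ∧ w = gadV j 5) ∨ (u = gadV j 2 ∧ w = gadV j 4) ∨
    (u = gadV j 1 ∧ w = gadV j 5))

/-- The 3-SAT-to-3-coloring reduction graph of the 3-CNF formula `c` (the symmetrization of
`colRel c`). -/
def colGraph {V : Type} [DecidableEq V] {k : ℕ} (c : Fin k → Fin 3 → V × Bool) :
    SimpleGraph (ColVtx V k) :=
  SimpleGraph.fromRel (colRel c)

-- auxiliary part to be inserted
/-- Gadget coloring for one clause, as a function of the truth values of the first two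
literals. -/
def gCol (b0 b1 : Bool) (r : Fin 6) : Fin 3 :=
  if r = 0 then (if b0 || b1 then 2 else 1)
  else if r = 1 then (if b1 then 2 else 0)
  else if r = 2 then (if b0 then 2 else 1)
  else if r = 3 then (if b1 then 1 else 2)
  else if r = 4 then (if b0 then 1 else 2)
  else (if b1 then 0 else if b0 then 1 else 2)

/-- The coloring of `G(c)` induced by an assignment `σ`. -/
def satCol {V : Type} [DecidableEq V] {k : ℕ} (c : Fin k → Fin 3 → V × Bool) (σ : V → Bool) :
    ColVtx V k → Fin 3
  | .inl i => i
  | .inr (.inl l) => if σ l.1 = l.2 then 0 else 1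
  | .inr (.inr (j, r)) =>
      gCol (decide (σ (c j 0).1 = (c j 0).2)) (decide (σ (c j 1).1 = (c j 1).2)) r

lemma pick3 : ∀ x a b c : Fin 3, a ≠ b → a ≠ c → b ≠ c → x ≠ a → x ≠ b → x = c := by decide

lemma two3 : ∀ x a b c : Fin 3, a ≠ b → a ≠ c → b ≠ c → x ≠ c → x = a ∨ x = b := by decide

lemma iff3 : ∀ x y a b : Fin 3, a ≠ b → (x = a ∨ x = b) → (y = a ∨ y = b) → x ≠ y →
    (¬ x = a ↔ y = a) := by decide

lemma satCol_ne {V : Type} [DecidableEq V] {k : ℕ} (c : Fin k → Fin 3 → V × Bool)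
    (σ : V → Bool) (hσ : ∀ j : Fin k, ∃ p : Fin 3, σ (c j p).1 = (c j p).2)
    {u w : ColVtx V k} (h : colRel c u w) : satCol c σ u ≠ satCol c σ w := by
  rcases h with ⟨rfl, rfl⟩ | ⟨rfl, rfl⟩ | ⟨rfl, rfl⟩ |
    ⟨v, ⟨rfl, rfl⟩ | ⟨rfl, rfl⟩ | ⟨rfl, rfl⟩⟩ |
    ⟨j, ⟨rfl, rfl⟩ | ⟨rfl, rfl⟩ | ⟨rfl, rfl⟩ | ⟨rfl, rfl⟩ | ⟨rfl, rfl⟩ | ⟨rfl, rfl⟩ |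
      ⟨rfl, rfl⟩ | ⟨rfl, rfl⟩ | ⟨rfl, rfl⟩ | ⟨rfl, rfl⟩ | ⟨rfl, rfl⟩ | ⟨rfl, rfl⟩ | ⟨rfl, rfl⟩⟩ <;>
  simp only [satCol, vT, vF, vB, litV, gadV] <;>
  first
  | decide
  | (cases hv : σ v <;> simp [hv])
  | (by_cases h0 : σ (c j 0).1 = (c j 0).2 <;>
     by_cases h1 : σ (c j 1).1 = (c j 1).2 <;>
     by_cases h2 : σ (c j 2).1 = (c j 2).2 <;>
     simp [gCol, h0, h1, h2] <;>
     (obtain ⟨p, hp⟩ := hσ j; fin_cases p <;> simp_all))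

/-- A 3-CNF formula `c` is satisfiable iff its reduction graph `G(c)` is 3-colorable. -/
theorem threeSat_iff_threeColorable {V : Type} [DecidableEq V] {k : ℕ}
    (c : Fin k → Fin 3 → V × Bool) :
    (∃ σ : V → Bool, ∀ j : Fin k, ∃ p : Fin 3, σ (c j p).1 = (c j p).2) ↔
      (colGraph c).Colorable 3 := by
  constructor
  · rintro ⟨σ, hσ⟩
    exact ⟨SimpleGraph.Coloring.mk (satCol c σ) (by
      rintro u w ⟨hne, h | h⟩
      · exact satCol_ne c σ hσ h
      · exact (satCol_ne c σ hσ h).symm)⟩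
  · rintro ⟨C⟩
    have adjH : ∀ u w : ColVtx V k, u ≠ w → colRel c u w → (colGraph c).Adj u w := by
      intro u w h1 h2
      rw [colGraph, SimpleGraph.fromRel_adj]
      exact ⟨h1, Or.inl h2⟩
    have hTF : C vT ≠ C vF :=
      C.valid (adjH _ _ (by simp [vT, vF]) (Or.inl ⟨rfl, rfl⟩))
    have hFB : C vF ≠ C vB :=
      C.valid (adjH _ _ (by simp [vF, vB]) (Or.inr (Or.inl ⟨rfl, rfl⟩)))
    have hBT : C vB ≠ C vT :=
      C.valid (adjH _ _ (by simp [vB, vT]) (Or.inr (Or.inr (Or.inl ⟨rfl, rfl⟩))))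
    have aLit : ∀ v : V, (colGraph c).Adj (litV (v, true)) (litV (v, false)) := fun v =>
      adjH _ _ (by simp [litV]) (Or.inr (Or.inr (Or.inr (Or.inl ⟨v, Or.inl ⟨rfl, rfl⟩⟩))))
    have aLitB : ∀ l : V × Bool, (colGraph c).Adj (litV l) vB := by
      rintro ⟨v, b⟩
      cases b
      · exact adjH _ _ (by simp [litV, vB])
          (Or.inr (Or.inr (Or.inr (Or.inl ⟨v, Or.inr (Or.inr ⟨rfl, rfl⟩)⟩))))
      · exact adjH _ _ (by simp [litV, vB])
          (Or.inr (Or.inr (Or.inr (Or.inl ⟨v, Or.inr (Or.inl ⟨rfl, rfl⟩)⟩))))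
    have litTF : ∀ l : V × Bool, C (litV l) = C vT ∨ C (litV l) = C vF := fun l =>
      two3 _ _ _ _ hTF (Ne.symm hBT) hFB (C.valid (aLitB l))
    refine ⟨fun v => decide (C (litV (v, true)) = C vT), fun j => ?_⟩
    have hliff : ∀ l : V × Bool,
        ((fun v => decide (C (litV (v, true)) = C vT)) l.1 = l.2 ↔ C (litV l) = C vT) := by
      rintro ⟨v, b⟩
      cases b
      · simp only [decide_eq_false_iff_not]
        exact iff3 _ _ _ _ hTF (litTF (v, true)) (litTF (v, false)) (C.valid (aLit v))
      · simp
    by_contra hno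
    push_neg at hno
    have hlit : ∀ p : Fin 3, C (litV (c j p)) = C vF := by
      intro p
      rcases litTF (c j p) with h | h
      · exact absurd ((hliff (c j p)).mpr h) (hno p)
      · exact h
    have mk : ∀ {u w : ColVtx V k}, u ≠ w →
        ((u = gadV j 0 ∧ w = gadV j 5) ∨ (u = gadV j 0 ∧ w = vT) ∨
        (u = gadV j 0 ∧ w = litV (c j 2)) ∨
        (u = vT ∧ w = gadV j 3) ∨ (u = vT ∧ w = gadV j 4) ∨ (u = vT ∧ w = gadV j 2) ∨
        (u = gadV j 3 ∧ w = gadV j 1) ∨ (u = gadV j 3 ∧ w = litV (c j 1)) ∨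
        (u = vF ∧ w = gadV j 1) ∨ (u = litV (c j 0) ∧ w = gadV j 4) ∨
        (u = gadV j 2 ∧ w = gadV j 5) ∨ (u = gadV j 2 ∧ w = gadV j 4) ∨
        (u = gadV j 1 ∧ w = gadV j 5)) → (colGraph c).Adj u w := fun h1 h2 =>
      adjH _ _ h1 (Or.inr (Or.inr (Or.inr (Or.inr ⟨j, h2⟩))))
    -- edge inequalities
    have e05 : C (gadV j 0) ≠ C (gadV j 5) :=
      C.valid (mk (by simp [gadV]) (Or.inl ⟨rfl, rfl⟩))
    have e0T : C (gadV j 0) ≠ C vT :=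
      C.valid (mk (by simp [gadV, vT]) (Or.inr (Or.inl ⟨rfl, rfl⟩)))
    have e0l2 : C (gadV j 0) ≠ C (litV (c j 2)) :=
      C.valid (mk (by simp [gadV, litV]) (Or.inr (Or.inr (Or.inl ⟨rfl, rfl⟩))))
    have eT3 : C vT ≠ C (gadV j 3) :=
      C.valid (mk (by simp [gadV, vT]) (Or.inr (Or.inr (Or.inr (Or.inl ⟨rfl, rfl⟩)))))
    have eT4 : C vT ≠ C (gadV j 4) :=
      C.valid (mk (by simp [gadV, vT])
        (Or.inr (Or.inr (Or.inr (Or.inr (Or.inl ⟨rfl, rfl⟩))))))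
    have eT2 : C vT ≠ C (gadV j 2) :=
      C.valid (mk (by simp [gadV, vT])
        (Or.inr (Or.inr (Or.inr (Or.inr (Or.inr (Or.inl ⟨rfl, rfl⟩)))))))
    have e31 : C (gadV j 3) ≠ C (gadV j 1) :=
      C.valid (mk (by simp [gadV])
        (Or.inr (Or.inr (Or.inr (Or.inr (Or.inr (Or.inr (Or.inl ⟨rfl, rfl⟩))))))))
    have e3l1 : C (gadV j 3) ≠ C (litV (c j 1)) :=
      C.valid (mk (by simp [gadV, litV])
        (Or.inr (Or.inr (Or.inr (Or.inr (Or.inr (Or.inr (Or.inr (Or.inl ⟨rfl, rfl⟩)))))))))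
    have eF1 : C vF ≠ C (gadV j 1) :=
      C.valid (mk (by simp [gadV, vF])
        (Or.inr (Or.inr (Or.inr (Or.inr (Or.inr (Or.inr (Or.inr (Or.inr
          (Or.inl ⟨rfl, rfl⟩))))))))))
    have el04 : C (litV (c j 0)) ≠ C (gadV j 4) :=
      C.valid (mk (by simp [gadV, litV])
        (Or.inr (Or.inr (Or.inr (Or.inr (Or.inr (Or.inr (Or.inr (Or.inr (Or.inr
          (Or.inl ⟨rfl, rfl⟩)))))))))))
    have e25 : C (gadV j 2) ≠ C (gadV j 5) :=
      C.valid (mk (by simp [gadV])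
        (Or.inr (Or.inr (Or.inr (Or.inr (Or.inr (Or.inr (Or.inr (Or.inr (Or.inr (Or.inr
          (Or.inl ⟨rfl, rfl⟩))))))))))))
    have e24 : C (gadV j 2) ≠ C (gadV j 4) :=
      C.valid (mk (by simp [gadV])
        (Or.inr (Or.inr (Or.inr (Or.inr (Or.inr (Or.inr (Or.inr (Or.inr (Or.inr (Or.inr
          (Or.inr (Or.inl ⟨rfl, rfl⟩)))))))))))))
    have e15 : C (gadV j 1) ≠ C (gadV j 5) :=
      C.valid (mk (by simp [gadV])
        (Or.inr (Or.inr (Or.inr (Or.inr (Or.inr (Or.inr (Or.inr (Or.inr (Or.inr (Or.inr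
          (Or.inr (Or.inr ⟨rfl, rfl⟩)))))))))))))
    -- forced colors
    have g4 : C (gadV j 4) = C vB :=
      pick3 _ _ _ _ hTF (Ne.symm hBT) hFB (Ne.symm eT4) (fun h => el04 ((hlit 0).trans h.symm))
    have g2 : C (gadV j 2) = C vF :=
      pick3 _ _ _ _ (Ne.symm hBT) hTF (Ne.symm hFB) (Ne.symm eT2) (fun h => e24 (h.trans g4.symm))
    have g3 : C (gadV j 3) = C vB :=
      pick3 _ _ _ _ hTF (Ne.symm hBT) hFB (Ne.symm eT3) (fun h => e3l1 (h.trans (hlit 1).symm))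
    have g1 : C (gadV j 1) = C vT :=
      pick3 _ _ _ _ hFB (Ne.symm hTF) hBT (Ne.symm eF1) (fun h => e31 (g3.trans h.symm))
    have g5 : C (gadV j 5) = C vB :=
      pick3 _ _ _ _ (Ne.symm hTF) hFB (Ne.symm hBT) (fun h => e25 (g2.trans h.symm))
        (fun h => e15 (g1.trans h.symm))
    have g0 : C (gadV j 0) = C vB :=
      pick3 _ _ _ _ hTF (Ne.symm hBT) hFB e0T (fun h => e0l2 (h.trans (hlit 2).symm))
    exact e05 (g0.trans g5.symm)
end
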